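/- Let X = {X_j, j ∈ ℤᵈ} be a wide-sense stationary random field with nonnegative covariance function R(m) = cov(X_0, X_m). Then for every integer q > 1 and every n ∈ ℕᵈ, K_X(n) ≤ (q/(q−1))ᵈ · Var S(U_{qn}) / ⟨qn⟩, where K_X(n) = Σ_{−n ≤ m ≤ n} R(m), U_{qn} = {j ∈ ℤᵈ : 1 ≤ j ≤ qn}, and ⟨qn⟩ = qᵈ n₁⋯n_d. -/

import Mathlib

open MeasureTheory Filter ProbabilityTheory
open scoped Classical BigOperators

/-- Covariance of two real random variables. -/
noncomputable def cov {Ω : Type*} [MeasurableSpace Ω] (μ : Measure Ω) (X Y : Ω → ℝ) : ℝ :=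
  ∫ ω, (X ω - ∫ ω', X ω' ∂μ) * (Y ω - ∫ ω', Y ω' ∂μ) ∂μ

/-- Variance of a real random variable. -/
noncomputable def var {Ω : Type*} [MeasurableSpace Ω] (μ : Measure Ω) (X : Ω → ℝ) : ℝ :=
  cov μ X X

/-- Positive (weak) association of a family of real random variables: for all finite
disjoint index sets and all bounded coordinatewise nondecreasing Lipschitz functions,
the covariance is nonnegative. -/
def PosAssoc {Ω ι : Type*} [MeasurableSpace Ω] (μ : Measure Ω) (X : ι → Ω → ℝ) : Prop :=
  ∀ (I J : Finset ι), Disjoint I J →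
    ∀ (f : (I → ℝ) → ℝ) (g : (J → ℝ) → ℝ),
      Monotone f → Monotone g →
      (∃ K, LipschitzWith K f) → (∃ K, LipschitzWith K g) →
      (∃ C, ∀ y, |f y| ≤ C) → (∃ C, ∀ y, |g y| ≤ C) →
      0 ≤ cov μ (fun ω => f fun i => X i ω) (fun ω => g fun j => X j ω)

/-- `L : ℕ^d → ℝ` is slowly varying at infinity. -/
def SlowlyVarying (d : ℕ) (L : (Fin d → ℕ) → ℝ) : Prop :=
  ∀ a : Fin d → ℕ, (∀ k, 0 < a k) →
    Tendsto (fun x : Fin d → ℕ => L (fun k => a k * x k) / L x) atTop (nhds 1)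

/-- `K : ℕ → ℝ` is slowly varying at infinity. -/
def SlowlyVarying1 (K : ℕ → ℝ) : Prop :=
  ∀ a : ℕ, 0 < a → Tendsto (fun r : ℕ => K (a * r) / K r) atTop (nhds 1)

/-- Uniform integrability of a family of random variables. -/
def UnifInt {Ω ι : Type*} [MeasurableSpace Ω] (μ : Measure Ω) (Y : ι → Ω → ℝ) : Prop :=
  ∀ ε : ℝ, 0 < ε → ∃ c : ℝ, ∀ i, ∫ ω in {ω | c ≤ |Y i ω|}, |Y i ω| ∂μ ≤ ε

/-- Strict stationarity of a random field on ℤ^d. -/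
def StrictStationary {Ω : Type*} [MeasurableSpace Ω] (μ : Measure Ω) {d : ℕ}
    (X : (Fin d → ℤ) → Ω → ℝ) : Prop :=
  ∀ (k : ℕ) (j : Fin k → (Fin d → ℤ)) (u : Fin d → ℤ),
    Measure.map (fun ω (i : Fin k) => X (j i + u) ω) μ =
      Measure.map (fun ω (i : Fin k) => X (j i) ω) μ

/-- The block `U_n = {j ∈ ℤ^d : 1 ≤ j ≤ n}`. -/
noncomputable def blockU {d : ℕ} (n : Fin d → ℕ) : Finset (Fin d → ℤ) :=
  Finset.Icc (fun _ => 1) (fun k => (n k : ℤ))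

/-- Partial sum of the field over the block `U_n`. -/
noncomputable def partialSum {Ω : Type*} {d : ℕ} (X : (Fin d → ℤ) → Ω → ℝ)
    (n : Fin d → ℕ) (ω : Ω) : ℝ :=
  ∑ j ∈ blockU n, X j ω

/-- `K_X(n) = Σ_{-n ≤ j ≤ n} R(j)` (sup-norm blocks). -/
noncomputable def KsumF {d : ℕ} (R : (Fin d → ℤ) → ℝ) (n : Fin d → ℕ) : ℝ :=
  ∑ j ∈ Finset.Icc (fun k => -(n k : ℤ)) (fun k => (n k : ℤ)), R j

/-- `K(r) = Σ_{‖j‖ ≤ r} R(j)` (Euclidean balls). -/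
noncomputable def Keucl {d : ℕ} (R : (Fin d → ℤ) → ℝ) (r : ℕ) : ℝ :=
  ∑ j ∈ (Finset.Icc (fun _ => -(r : ℤ)) (fun _ => (r : ℤ))).filter
      (fun j => Real.sqrt (∑ k, ((j k : ℝ)) ^ 2) ≤ (r : ℝ)), R j

/-!
Expanding the variance gives `Var S(U_m) = ∑_{i, j ∈ U_m} R(i - j)`. As `R ≥ 0`, we may drop
all differences `u = i - j` outside the box `-n ≤ u ≤ n`, and each remaining `u` is realised by at
least `∏ₖ (mₖ - nₖ)` pairs, since a translate of `U_{m - n}` lies in `U_m ∩ (U_m - u)`. For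
`m = q n` this gives `∏ₖ (q - 1) nₖ · K_X(n) ≤ Var S(U_{qn})`, which is the claim.
-/

open Finset

section Covariance

variable {Ω ι κ : Type*} [MeasurableSpace Ω] {μ : Measure Ω}

theorem sum_sub_integral_sum {X : ι → Ω → ℝ} (hX : ∀ i, Integrable (X i) μ) (s : Finset ι)
    (ω : Ω) :
    ∑ i ∈ s, X i ω - ∫ ω', ∑ i ∈ s, X i ω' ∂μ = ∑ i ∈ s, (X i ω - ∫ ω', X i ω' ∂μ) := by
  rw [integral_finsetSum _ fun i _ => hX i, sum_sub_distrib]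

theorem cov_sum_sum [IsFiniteMeasure μ] {X : ι → Ω → ℝ} {Y : κ → Ω → ℝ}
    (hX : ∀ i, MemLp (X i) 2 μ) (hY : ∀ j, MemLp (Y j) 2 μ) (s : Finset ι) (t : Finset κ) :
    cov μ (fun ω => ∑ i ∈ s, X i ω) (fun ω => ∑ j ∈ t, Y j ω) =
      ∑ i ∈ s, ∑ j ∈ t, cov μ (X i) (Y j) := by
  have hprod : ∀ i j, Integrable
      (fun ω => (X i ω - ∫ ω', X i ω' ∂μ) * (Y j ω - ∫ ω', Y j ω' ∂μ)) μ := fun i j =>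
    ((hX i).sub (memLp_const _)).integrable_mul ((hY j).sub (memLp_const _))
  unfold cov
  simp_rw [sum_sub_integral_sum (fun i => (hX i).integrable one_le_two),
    sum_sub_integral_sum (fun j => (hY j).integrable one_le_two), sum_mul_sum]
  rw [integral_finsetSum _ fun i _ => integrable_finsetSum _ fun j _ => hprod i j]
  exact sum_congr rfl fun i _ => integral_finsetSum _ fun j _ => hprod i j

end Covariance

theorem sum_card_smul_le_sum_sum_sub {G : Type*} [AddCommGroup G] [DecidableEq G]
    {R : G → ℝ} (hR : ∀ u, 0 ≤ R u) (A B : Finset G) :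
    ∑ u ∈ A, #{j ∈ B | j + u ∈ B} • R u ≤ ∑ i ∈ B, ∑ j ∈ B, R (i - j) := by
  have hfiber : ∀ j, ∑ u ∈ A with j + u ∈ B, R u ≤ ∑ i ∈ B, R (i - j) := fun j => by
    calc ∑ u ∈ A with j + u ∈ B, R u
        = ∑ i ∈ {u ∈ A | j + u ∈ B}.map (addLeftEmbedding j), R (i - j) := by
          simp [sum_map]
      _ ≤ ∑ i ∈ B, R (i - j) :=
          sum_le_sum_of_subset_of_nonneg (by
            simp only [subset_iff, Finset.mem_map, mem_filter]
            rintro _ ⟨u, ⟨-, hu⟩, rfl⟩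
            exact hu) fun _ _ _ => hR _
  calc ∑ u ∈ A, #{j ∈ B | j + u ∈ B} • R u
      = ∑ j ∈ B, ∑ u ∈ A with j + u ∈ B, R u := by
        simp_rw [← sum_const, sum_filter]
        exact sum_comm
    _ ≤ ∑ j ∈ B, ∑ i ∈ B, R (i - j) := sum_le_sum fun j _ => hfiber j
    _ = ∑ i ∈ B, ∑ j ∈ B, R (i - j) := sum_comm

theorem card_blockU {d : ℕ} (n : Fin d → ℕ) : #(blockU n) = ∏ k, n k := by
  simp [blockU, Pi.card_Icc]

theorem prod_le_card_blockU_filter_add_mem {d : ℕ} {l m n : Fin d → ℕ}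
    (hlm : ∀ k, l k + n k ≤ m k) {u : Fin d → ℤ}
    (hu : u ∈ Finset.Icc (fun k => -(n k : ℤ)) (fun k => (n k : ℤ))) :
    ∏ k, l k ≤ #{j ∈ blockU m | j + u ∈ blockU m} := by
  -- With `u⁻ = max 0 (-u)`, `j ↦ j + u⁻` maps `U_l` into `U_m`, and `j + u⁻ + u = j + u⁺` stays
  -- in `U_m` as well.
  rw [← card_blockU, ← card_map (addLeftEmbedding fun k => max 0 (-u k))]
  refine card_le_card fun _ hj => ?_
  obtain ⟨v, hv, rfl⟩ := Finset.mem_map.1 hj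
  simp only [blockU, mem_Icc, mem_filter] at hu hv ⊢
  simp only [addLeftEmbedding_apply, Pi.le_def, Pi.add_apply, ← forall_and] at hu hv ⊢
  intro k
  have := hlm k; have := hu k; have := hv k
  omega

theorem prod_mul_KsumF_le_sum_sum_sub {d : ℕ} {R : (Fin d → ℤ) → ℝ} (hR : ∀ u, 0 ≤ R u)
    {q : ℕ} (hq : 1 ≤ q) (n : Fin d → ℕ) :
    (∏ k, ((q : ℝ) - 1) * n k) * KsumF R n ≤
      ∑ i ∈ blockU fun k => q * n k, ∑ j ∈ blockU fun k => q * n k, R (i - j) := by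
  rw [KsumF, mul_sum]
  refine (sum_le_sum fun u hu => ?_).trans (sum_card_smul_le_sum_sum_sub hR _ _)
  rw [nsmul_eq_mul]
  refine mul_le_mul_of_nonneg_right ?_ (hR u)
  have hlm : ∀ k, (q - 1) * n k + n k ≤ q * n k := fun k => by
    rw [← Nat.succ_mul, Nat.succ_eq_add_one, Nat.sub_add_cancel hq]
  calc ∏ k, ((q : ℝ) - 1) * n k = ((∏ k, (q - 1) * n k : ℕ) : ℝ) := by
        push_cast [Nat.cast_sub hq]; rfl
    _ ≤ _ := by exact_mod_cast prod_le_card_blockU_filter_add_mem hlm hu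

theorem stmt6_general {Ω : Type*} [MeasurableSpace Ω] (μ : Measure Ω) [IsProbabilityMeasure μ]
    {d : ℕ} (X : (Fin d → ℤ) → Ω → ℝ) (R : (Fin d → ℤ) → ℝ)
    (hL2 : ∀ j, MemLp (X j) 2 μ)
    (hcov : ∀ i j, cov μ (X i) (X j) = R (i - j)) (hR : ∀ m, 0 ≤ R m) :
    ∀ q : ℕ, 1 < q → ∀ n : Fin d → ℕ, (∀ k, 0 < n k) →
      KsumF R n ≤ ((q : ℝ) / ((q : ℝ) - 1)) ^ d *
        (var μ (partialSum X (fun k => q * n k)) / ∏ k, ((q : ℝ) * (n k : ℝ))) := by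
  intro q hq n hn
  have hq' : (1 : ℝ) < q := by exact_mod_cast hq
  have hvar : var μ (partialSum X fun k => q * n k) =
      ∑ i ∈ blockU fun k => q * n k, ∑ j ∈ blockU fun k => q * n k, R (i - j) :=
    (cov_sum_sum hL2 hL2 _ _).trans (by simp only [hcov])
  have hpos : 0 < ∏ k, ((q : ℝ) - 1) * n k :=
    prod_pos fun k _ => mul_pos (by linarith) (by exact_mod_cast hn k)
  have hn' : ∏ k, (n k : ℝ) ≠ 0 := prod_ne_zero_iff.2 fun k _ => by exact_mod_cast (hn k).ne'
  calc KsumF R n ≤ var μ (partialSum X fun k => q * n k) / ∏ k, ((q : ℝ) - 1) * n k := by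
        rw [le_div_iff₀' hpos, hvar]
        exact prod_mul_KsumF_le_sum_sum_sub hR hq.le n
    _ = _ := by
        rw [prod_mul_distrib, prod_mul_distrib, prod_const, prod_const, card_univ,
          Fintype.card_fin, div_pow]
        field_simp [sub_ne_zero.2 hq'.ne', hn']

/-- for every integer `q > 1` and every `n`,
`K_X(n) ≤ (q/(q-1))^d · Var S(U_{qn}) / ⟨qn⟩`. -/
theorem stmt6 {Ω : Type*} [MeasurableSpace Ω] (μ : Measure Ω) [IsProbabilityMeasure μ]
    {d : ℕ} (X : (Fin d → ℤ) → Ω → ℝ) (R : (Fin d → ℤ) → ℝ)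
    (hmeas : ∀ j, Measurable (X j)) (hL2 : ∀ j, MemLp (X j) 2 μ)
    (hcov : ∀ i j, cov μ (X i) (X j) = R (i - j)) (hR : ∀ m, 0 ≤ R m) :
    ∀ q : ℕ, 1 < q → ∀ n : Fin d → ℕ, (∀ k, 0 < n k) →
      KsumF R n ≤ ((q : ℝ) / ((q : ℝ) - 1)) ^ d *
        (var μ (partialSum X (fun k => q * n k)) / ∏ k, ((q : ℝ) * (n k : ℝ))) :=
  stmt6_general μ X R hL2 hcov hR
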